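/- Let λ be a weak composition of n, h a Hessenberg function with h(i) < i for all i. Suppose V_• = uwE_• ∈ C_w lies in the Springer fiber B^{X_λ} with uw = u_i v u_0 y (the factorization via Lemma on Schubert cells, u_i ∈ U_i for i = w(n), u_0 ∈ U^y). Then the entry u_{ij} of u_i is zero unless j labels a box at the end of a row in the base filling R(e) of λ. Equivalently: if e_j ∈ im(X_λ) and j > i, then u_{ij} = 0. -/

import Mathlib

open Matrix

attribute [local instance] Classical.propDecidable

noncomputable section

/-- Label of the box in row `i` (0-indexed from the top), column `j` (0-indexed) of the base
filling of the weak composition `lam`: columns filled left to right, each column bottom to top,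
labels `1,…,n`. -/
def baseLabel (lam : List ℕ) (i j : ℕ) : ℕ :=
  (∑ i' ∈ Finset.range lam.length, min (lam.getD i' 0) j) +
    ((Finset.Ico i lam.length).filter (fun i' => j < lam.getD i' 0)).card

def IsBox (lam : List ℕ) (i j : ℕ) : Prop :=
  i < lam.length ∧ j < lam.getD i 0

/-- The nilpotent matrix `X_λ = Σ E_{ℓ r}` over pairs where the box labeled `r` is directly right
of the box labeled `ℓ` in the base filling (labels are 1-indexed; matrix indices 0-indexed). -/
def Xlam (n : ℕ) (lam : List ℕ) : Matrix (Fin n) (Fin n) ℂ :=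
  fun ℓ r => if (∃ i j, IsBox lam i (j+1) ∧ baseLabel lam i j = (ℓ : ℕ) + 1 ∧
      baseLabel lam i (j+1) = (r : ℕ) + 1) then 1 else 0

def IsFullFlag (n : ℕ) (V : ℕ → Submodule ℂ (Fin n → ℂ)) : Prop :=
  V 0 = ⊥ ∧ (∀ i, V i ≤ V (i+1)) ∧ ∀ i, i ≤ n → Module.finrank ℂ (V i) = i

def InHess (n : ℕ) (X : Matrix (Fin n) (Fin n) ℂ) (h : ℕ → ℕ)
    (V : ℕ → Submodule ℂ (Fin n → ℂ)) : Prop :=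
  ∀ i, i ≤ n → ∀ v ∈ V i, X.mulVec v ∈ V (h i)

/-- The flag `wE_•`, whose `k`-th space is spanned by `e_{w(1)},…,e_{w(k)}` (0-indexed). -/
def permFlag (n : ℕ) (w : Equiv.Perm (Fin n)) : ℕ → Submodule ℂ (Fin n → ℂ) :=
  fun k => Submodule.span ℂ {v | ∃ j : Fin n, (j : ℕ) < k ∧ v = Pi.single (w j) (1 : ℂ)}

/-- The flag whose `k`-th space is spanned by the first `k` columns of `g`. -/
def matFlag (n : ℕ) (g : Matrix (Fin n) (Fin n) ℂ) : ℕ → Submodule ℂ (Fin n → ℂ) :=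
  fun k => Submodule.span ℂ {c | ∃ j : Fin n, (j : ℕ) < k ∧ c = fun a => g a j}

def permMat (n : ℕ) (σ : Equiv.Perm (Fin n)) : Matrix (Fin n) (Fin n) ℂ :=
  fun a b => if σ b = a then 1 else 0

def invSet (n : ℕ) (w : Equiv.Perm (Fin n)) : Finset (Fin n × Fin n) :=
  Finset.univ.filter (fun p => p.2 < p.1 ∧ w p.1 < w p.2)

def blen (n : ℕ) (w : Equiv.Perm (Fin n)) : ℕ := (invSet n w).card

open Fin.NatCast in
/-- `v = s_i s_{i+1} ⋯ s_{n-1}` (0-indexed simple transpositions `swap j (j+1)`). -/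
def vPerm (n : ℕ) (i : ℕ) : Equiv.Perm (Fin (n+1)) :=
  ((List.Ico i n).map (fun j : ℕ => Equiv.swap (j : Fin (n+1)) ((j+1 : ℕ) : Fin (n+1)))).prod

/-- `R(w)` is row-strict: the entry in the box labeled `m` of the base filling is `w⁻¹(m)`,
so entry `p` (0-indexed) occupies the box whose base label is `w(p)+1`. -/
def RowStrictT (n : ℕ) (lam : List ℕ) (w : Equiv.Perm (Fin n)) : Prop :=
  ∀ i j, IsBox lam i (j+1) → ∀ p q : Fin n,
    (w p : ℕ) + 1 = baseLabel lam i j → (w q : ℕ) + 1 = baseLabel lam i (j+1) → p < q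

def HStrictT (n : ℕ) (lam : List ℕ) (h : ℕ → ℕ) (w : Equiv.Perm (Fin n)) : Prop :=
  ∀ i j, IsBox lam i (j+1) → ∀ p q : Fin n,
    (w p : ℕ) + 1 = baseLabel lam i j → (w q : ℕ) + 1 = baseLabel lam i (j+1) →
      (p : ℕ) + 1 ≤ h ((q : ℕ) + 1)

/-- `(k,ℓ)` is a Hessenberg inversion of `R(w)` (entries 0-indexed: values are index+1). -/
def HessInvT (n : ℕ) (lam : List ℕ) (h : ℕ → ℕ) (w : Equiv.Perm (Fin n)) (k ℓ : Fin n) : Prop :=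
  ℓ < k ∧ ∃ ik jk il jl : ℕ, IsBox lam ik jk ∧ IsBox lam il jl ∧
    baseLabel lam ik jk = (w k : ℕ) + 1 ∧ baseLabel lam il jl = (w ℓ : ℕ) + 1 ∧
    (jk < jl ∨ (jk = jl ∧ il < ik)) ∧
    (∀ r : Fin n, IsBox lam il (jl + 1) → (w r : ℕ) + 1 = baseLabel lam il (jl + 1) →
      (k : ℕ) + 1 ≤ h ((r : ℕ) + 1))

/-- Springer inversions: Hessenberg inversions for `h = (0,1,…,n-1)`, i.e. `h(i) = i - 1`. -/
def SpringerInvT (n : ℕ) (lam : List ℕ) (w : Equiv.Perm (Fin n)) (k ℓ : Fin n) : Prop :=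
  HessInvT n lam (fun m => m - 1) w k ℓ

/-- The box labeled `b+1` is directly right of the box labeled `a+1` in the base filling. -/
def RightNbr (lam : List ℕ) (a b : ℕ) : Prop :=
  ∃ i j, IsBox lam i (j+1) ∧ baseLabel lam i j = a + 1 ∧ baseLabel lam i (j+1) = b + 1

/-- The box labeled `a+1` is at the end of its row in the base filling. -/
def EndOfRow (lam : List ℕ) (a : ℕ) : Prop :=
  ∃ i j, IsBox lam i j ∧ ¬ IsBox lam i (j+1) ∧ baseLabel lam i j = a + 1

def IsUpperUnip (n : ℕ) (g : Matrix (Fin n) (Fin n) ℂ) : Prop :=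
  (∀ i, g i i = 1) ∧ ∀ i j : Fin n, j < i → g i j = 0

/-- `U_i`: upper unipotent matrices whose off-diagonal entries are supported in row `i`. -/
def InUi (n : ℕ) (i : Fin n) (g : Matrix (Fin n) (Fin n) ℂ) : Prop :=
  IsUpperUnip n g ∧ ∀ a b : Fin n, a ≠ b → g a b ≠ 0 → a = i

/-- `U_0`: upper unipotent matrices of `GL_n` embedded in `GL_{n+1}` (last column trivial). -/
def InU0 (n : ℕ) (g : Matrix (Fin (n+1)) (Fin (n+1)) ℂ) : Prop :=
  IsUpperUnip (n+1) g ∧ ∀ a : Fin (n+1), a ≠ Fin.last n → g a (Fin.last n) = 0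

/-- The element of `B_k(w)` with coordinates `x`: it sends `e_{w(j)} = X_λ^m e_{w(ℓ)}` to
`e_{w(j)} + x ℓ • X_λ^m e_{w(k)}` for Springer inversions `(k,ℓ)`, fixing all other `e_{w(j)}`. -/
def BkMat (n : ℕ) (lam : List ℕ) (w : Equiv.Perm (Fin n)) (k : Fin n) (x : Fin n → ℂ) :
    Matrix (Fin n) (Fin n) ℂ :=
  1 + ∑ ℓ : Fin n, if SpringerInvT n lam w k ℓ then
      x ℓ • (∑ m ∈ Finset.range n,
        (Xlam n lam) ^ m * Matrix.single (w k) (w ℓ) (1 : ℂ) * ((Xlam n lam)ᵀ) ^ m)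
    else 0

/-- The product `g_n g_{n-1} ⋯ g_2` of elements `g_k ∈ B_k(w)` with coordinates `x k`. -/
def bigB (n : ℕ) (lam : List ℕ) (w : Equiv.Perm (Fin n)) (x : Fin n → Fin n → ℂ) :
    Matrix (Fin n) (Fin n) ℂ :=
  ((List.ofFn (fun k : Fin n => BkMat n lam w k (x k))).reverse).prod

/- Abstract fillings `T : row → column → value` of the diagram of `lam`, values in `[1, n]`. -/

def RowStrictF (lam : List ℕ) (T : ℕ → ℕ → ℕ) : Prop :=
  ∀ i j, IsBox lam i (j+1) → T i j < T i (j+1)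

def HStrictF (lam : List ℕ) (h : ℕ → ℕ) (T : ℕ → ℕ → ℕ) : Prop :=
  ∀ i j, IsBox lam i (j+1) → T i j ≤ h (T i (j+1))

def GoodFilling (lam : List ℕ) (T : ℕ → ℕ → ℕ) : Prop :=
  (∀ i j, IsBox lam i j → 1 ≤ T i j ∧ T i j ≤ lam.sum) ∧
  (∀ m, 1 ≤ m → m ≤ lam.sum → ∃ i j, IsBox lam i j ∧ T i j = m) ∧
  (∀ i j i' j', IsBox lam i j → IsBox lam i' j' → T i j = T i' j' → i = i' ∧ j = j')

def HessInvF (lam : List ℕ) (h : ℕ → ℕ) (T : ℕ → ℕ → ℕ) (k ℓ : ℕ) : Prop :=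
  ℓ < k ∧ ∃ ik jk il jl : ℕ, IsBox lam ik jk ∧ IsBox lam il jl ∧
    T ik jk = k ∧ T il jl = ℓ ∧
    (jk < jl ∨ (jk = jl ∧ il < ik)) ∧
    (IsBox lam il (jl + 1) → k ≤ h (T il (jl + 1)))

/-- `S` is obtained from `T` by sorting each column increasingly from top to bottom:
same column entries (as sets, entries being distinct), with columns of `S` increasing. -/
def ColSortedOf (lam : List ℕ) (T S : ℕ → ℕ → ℕ) : Prop :=
  (∀ j m, (∃ i, IsBox lam i j ∧ T i j = m) ↔ (∃ i, IsBox lam i j ∧ S i j = m)) ∧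
  (∀ i j, IsBox lam i j → IsBox lam (i+1) j → S i j < S (i+1) j)

def IsPartitionL (lam : List ℕ) : Prop :=
  ∀ i i', i ≤ i' → lam.getD i' 0 ≤ lam.getD i 0

def hessInvCount (lam : List ℕ) (h : ℕ → ℕ) (T : ℕ → ℕ → ℕ) : ℕ :=
  (((Finset.range (lam.sum + 1)) ×ˢ (Finset.range (lam.sum + 1))).filter
    (fun p => HessInvF lam h T p.1 p.2)).card

def Hspace (n : ℕ) (h : ℕ → ℕ) : Submodule ℂ (Matrix (Fin n) (Fin n) ℂ) :=
  Submodule.span ℂ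
    {A | ∃ i j : Fin n, (i : ℕ) + 1 ≤ h ((j : ℕ) + 1) ∧ A = Matrix.single i j (1 : ℂ)}

/-- Left-nested iterated bracket `[f (m), [f (m-1), [⋯ [f 1, f 0]]]]`. -/
def iterBr (n : ℕ) (f : ℕ → Matrix (Fin n) (Fin n) ℂ) : ℕ → Matrix (Fin n) (Fin n) ℂ
  | 0 => f 0
  | (m+1) => f (m+1) * iterBr n f m - iterBr n f m * f (m+1)

/-! Write `g = u_i v u_0 y`. Since `v` sends the last index to `i` and `y` fixes it, the row
vector `ρ = e_iᵀ u_i⁻¹` satisfies `ρ g = e_lastᵀ`, so `ρ` vanishes on the hyperplane `V_n` spanned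
by the first `n` columns of `g`. The Springer condition at the top of the flag gives
`im X_λ ⊆ V_n`, and `e_j ∈ im X_λ` whenever the box labelled `j` has a right neighbour (its
label `r` gives `X_λ e_r = e_j`). Hence `ρ_j = 0`; as `(u_i - 1)² = 0`, `u_i⁻¹ = 2 - u_i`, so
`ρ_j = -u_{ij}` for `j ≠ i`. -/

lemma List.sum_range_getD (l : List ℕ) :
    ∑ i ∈ Finset.range l.length, l.getD i 0 = l.sum := by
  induction l with
  | nil => simp
  | cons a t ih =>
    rw [List.length_cons, Finset.sum_range_succ']
    simp only [List.getD_cons_succ, List.getD_cons_zero, List.sum_cons, ih]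
    omega

section BaseFilling

variable {lam : List ℕ}

/-- The number of boxes of the diagram of `lam` lying in the columns `< j`. -/
def boxesLeftOf (lam : List ℕ) (j : ℕ) : ℕ :=
  ∑ i ∈ Finset.range lam.length, min (lam.getD i 0) j

def colRowsFrom (lam : List ℕ) (i j : ℕ) : Finset ℕ :=
  (Finset.Ico i lam.length).filter (fun i' => j < lam.getD i' 0)

lemma baseLabel_eq (i j : ℕ) :
    baseLabel lam i j = boxesLeftOf lam j + (colRowsFrom lam i j).card := rfl

lemma boxesLeftOf_succ (j : ℕ) :
    boxesLeftOf lam (j + 1) = boxesLeftOf lam j + (colRowsFrom lam 0 j).card := by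
  rw [boxesLeftOf, boxesLeftOf, colRowsFrom, Finset.range_eq_Ico, Finset.card_filter,
    ← Finset.sum_add_distrib]
  refine Finset.sum_congr rfl fun i _ => ?_
  split_ifs <;> omega

lemma boxesLeftOf_mono {j j' : ℕ} (h : j ≤ j') : boxesLeftOf lam j ≤ boxesLeftOf lam j' :=
  Finset.sum_le_sum fun _ _ => min_le_min le_rfl h

lemma boxesLeftOf_le_sum (j : ℕ) : boxesLeftOf lam j ≤ lam.sum :=
  lam.sum_range_getD ▸ Finset.sum_le_sum fun _ _ => min_le_left _ _

lemma colRowsFrom_anti {i i' : ℕ} (h : i ≤ i') (j : ℕ) :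
    colRowsFrom lam i' j ⊆ colRowsFrom lam i j :=
  Finset.filter_subset_filter _ (Finset.Ico_subset_Ico_left h)

lemma mem_colRowsFrom_self {i j : ℕ} (hb : IsBox lam i j) : i ∈ colRowsFrom lam i j := by
  simp only [colRowsFrom, Finset.mem_filter, Finset.mem_Ico]
  exact ⟨⟨le_rfl, hb.1⟩, hb.2⟩

lemma boxesLeftOf_lt_baseLabel {i j : ℕ} (hb : IsBox lam i j) :
    boxesLeftOf lam j < baseLabel lam i j := by
  have := Finset.card_pos.mpr ⟨i, mem_colRowsFrom_self hb⟩
  rw [baseLabel_eq]; omega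

lemma baseLabel_le_boxesLeftOf_succ (i j : ℕ) : baseLabel lam i j ≤ boxesLeftOf lam (j + 1) := by
  have := Finset.card_le_card (colRowsFrom_anti (lam := lam) (Nat.zero_le i) j)
  rw [baseLabel_eq, boxesLeftOf_succ]; omega

lemma baseLabel_lt_of_lt_col {i j i' j' : ℕ} (hb' : IsBox lam i' j') (h : j < j') :
    baseLabel lam i j < baseLabel lam i' j' :=
  calc baseLabel lam i j ≤ boxesLeftOf lam (j + 1) := baseLabel_le_boxesLeftOf_succ i j
    _ ≤ boxesLeftOf lam j' := boxesLeftOf_mono h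
    _ < baseLabel lam i' j' := boxesLeftOf_lt_baseLabel hb'

lemma baseLabel_lt_of_lt_row {i i' j : ℕ} (hb' : IsBox lam i' j) (h : i' < i) :
    baseLabel lam i j < baseLabel lam i' j := by
  have hss : colRowsFrom lam i j ⊂ colRowsFrom lam i' j :=
    Finset.ssubset_iff_subset_ne.mpr ⟨colRowsFrom_anti h.le j, fun he => by
      have := he ▸ mem_colRowsFrom_self hb'
      simp only [colRowsFrom, Finset.mem_filter, Finset.mem_Ico] at this
      omega⟩
  have := Finset.card_lt_card hss
  rw [baseLabel_eq, baseLabel_eq]; omega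

lemma baseLabel_mem_Icc {i j : ℕ} (hb : IsBox lam i j) :
    baseLabel lam i j ∈ Finset.Icc 1 lam.sum :=
  Finset.mem_Icc.mpr ⟨by have := boxesLeftOf_lt_baseLabel hb; omega,
    (baseLabel_le_boxesLeftOf_succ i j).trans (boxesLeftOf_le_sum _)⟩

lemma baseLabel_injOn {i j i' j' : ℕ} (hb : IsBox lam i j) (hb' : IsBox lam i' j')
    (he : baseLabel lam i j = baseLabel lam i' j') : i = i' ∧ j = j' := by
  obtain hj | rfl | hj := lt_trichotomy j j'
  · exact absurd he (baseLabel_lt_of_lt_col hb' hj).ne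
  · obtain hi | rfl | hi := lt_trichotomy i i'
    · exact absurd he (baseLabel_lt_of_lt_row hb hi).ne'
    · exact ⟨rfl, rfl⟩
    · exact absurd he (baseLabel_lt_of_lt_row hb' hi).ne
  · exact absurd he (baseLabel_lt_of_lt_col hb hj).ne'

def boxes (lam : List ℕ) : Finset ((_ : ℕ) × ℕ) :=
  (Finset.range lam.length).sigma fun i => Finset.range (lam.getD i 0)

lemma mem_boxes {p : (_ : ℕ) × ℕ} : p ∈ boxes lam ↔ IsBox lam p.1 p.2 := by
  simp only [boxes, Finset.mem_sigma, Finset.mem_range, IsBox]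

lemma card_boxes : (boxes lam).card = lam.sum := by
  simp only [boxes, Finset.card_sigma, Finset.card_range, List.sum_range_getD]

lemma image_baseLabel_boxes :
    (boxes lam).image (fun p => baseLabel lam p.1 p.2) = Finset.Icc 1 lam.sum := by
  have hinj : Set.InjOn (fun p : (_ : ℕ) × ℕ => baseLabel lam p.1 p.2) (boxes lam) :=
    fun p hp q hq he => by
      obtain ⟨h1, h2⟩ := baseLabel_injOn (mem_boxes.mp hp) (mem_boxes.mp hq) he
      exact Sigma.ext h1 (heq_of_eq h2)
  refine Finset.eq_of_subset_of_card_le ?_ ?_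
  · simp only [Finset.subset_iff, Finset.mem_image]
    rintro _ ⟨p, hp, rfl⟩
    exact baseLabel_mem_Icc (mem_boxes.mp hp)
  · rw [Finset.card_image_of_injOn hinj, card_boxes, Nat.card_Icc, Nat.add_sub_cancel]

lemma exists_baseLabel_eq {m : ℕ} (hm : m ∈ Finset.Icc 1 lam.sum) :
    ∃ i j, IsBox lam i j ∧ baseLabel lam i j = m := by
  rw [← image_baseLabel_boxes, Finset.mem_image] at hm
  obtain ⟨p, hp, he⟩ := hm
  exact ⟨p.1, p.2, mem_boxes.mp hp, he⟩

lemma exists_rightNbr_of_not_endOfRow {a : ℕ} (ha : a < lam.sum) (h : ¬ EndOfRow lam a) :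
    ∃ r < lam.sum, RightNbr lam a r := by
  obtain ⟨i, j, hb, hl⟩ := exists_baseLabel_eq (lam := lam) (m := a + 1) (by simp; omega)
  have hb' : IsBox lam i (j + 1) := by_contra fun hc => h ⟨i, j, hb, hc, hl⟩
  have := Finset.mem_Icc.mp (baseLabel_mem_Icc hb')
  exact ⟨baseLabel lam i (j + 1) - 1, by omega, i, j, hb', hl, by omega⟩

lemma Xlam_mulVec_single_of_rightNbr {n : ℕ} {a r : Fin n} (h : RightNbr lam a r) :
    Xlam n lam *ᵥ Pi.single r 1 = Pi.single a 1 := by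
  obtain ⟨i, j, hb, ha, hr⟩ := h
  ext ℓ
  rw [mulVec_single_one, col_apply, Xlam]
  by_cases hℓ : ℓ = a
  · subst hℓ
    rw [Pi.single_eq_same, if_pos ⟨i, j, hb, ha, hr⟩]
  · rw [Pi.single_eq_of_ne hℓ, if_neg]
    rintro ⟨i', j', hb', hℓ', hr'⟩
    obtain ⟨rfl, hj⟩ := baseLabel_injOn hb' hb (hr'.trans hr.symm)
    obtain rfl : j' = j := by omega
    exact hℓ (Fin.ext (by omega))

lemma single_mem_range_Xlam {n : ℕ} (hn : lam.sum = n) {a : Fin n} (h : ¬ EndOfRow lam a) :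
    Pi.single a 1 ∈ LinearMap.range (Xlam n lam).mulVecLin := by
  obtain ⟨r, hr, hnbr⟩ := exists_rightNbr_of_not_endOfRow (hn ▸ a.isLt) h
  exact ⟨Pi.single ⟨r, hn ▸ hr⟩ 1, Xlam_mulVec_single_of_rightNbr hnbr⟩

end BaseFilling

section Matrices

variable {n : ℕ}

lemma permMat_eq_permMatrixHom (σ : Equiv.Perm (Fin n)) :
    permMat n σ = Matrix.permMatrixHom (R := ℂ) σ := by
  ext a b
  simp [permMat, Equiv.Perm.permMatrix, PEquiv.toMatrix_apply, Equiv.symm_apply_eq, eq_comm (a := a)]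

lemma isUnit_permMat (σ : Equiv.Perm (Fin n)) : IsUnit (permMat n σ) :=
  permMat_eq_permMatrixHom σ ▸ (Group.isUnit σ).map _

lemma row_permMat (σ : Equiv.Perm (Fin n)) (a : Fin n) :
    (permMat n σ).row a = Pi.single (σ⁻¹ a) 1 := by
  ext b
  simp [permMat, Pi.single_apply, Equiv.eq_symm_apply]

lemma IsUpperUnip.det_eq_one {g : Matrix (Fin n) (Fin n) ℂ} (hg : IsUpperUnip n g) :
    g.det = 1 := by
  rw [det_of_isUpperTriangular fun a b hab => hg.2 a b hab]
  simp [hg.1]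

lemma IsUpperUnip.isUnit {g : Matrix (Fin n) (Fin n) ℂ} (hg : IsUpperUnip n g) : IsUnit g :=
  (isUnit_iff_isUnit_det g).mpr (hg.det_eq_one ▸ isUnit_one)

lemma IsUpperUnip.row_last {g : Matrix (Fin (n + 1)) (Fin (n + 1)) ℂ}
    (hg : IsUpperUnip (n + 1) g) : g.row (Fin.last n) = Pi.single (Fin.last n) 1 := by
  ext b
  rcases eq_or_ne b (Fin.last n) with rfl | hb
  · simp [hg.1]
  · simp [Pi.single_eq_of_ne hb, hg.2 _ _ (Fin.lt_last_iff_ne_last.mpr hb)]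

lemma InUi.sub_one_apply_ne_zero {i : Fin n} {g : Matrix (Fin n) (Fin n) ℂ} (hg : InUi n i g)
    {a b : Fin n} (h : (g - 1) a b ≠ 0) : a = i ∧ a ≠ b := by
  rcases eq_or_ne a b with rfl | hab
  · simp [hg.1.1] at h
  · rw [Matrix.sub_apply, one_apply_ne hab, sub_zero] at h
    exact ⟨hg.2 a b hab h, hab⟩

lemma InUi.sub_one_mul_self {i : Fin n} {g : Matrix (Fin n) (Fin n) ℂ} (hg : InUi n i g) :
    (g - 1) * (g - 1) = 0 := by
  ext a b
  rw [mul_apply, Matrix.zero_apply]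
  refine Finset.sum_eq_zero fun c _ => by_contra fun hne => ?_
  obtain ⟨rfl, hac⟩ := hg.sub_one_apply_ne_zero (left_ne_zero_of_mul hne)
  exact hac (hg.sub_one_apply_ne_zero (right_ne_zero_of_mul hne)).1.symm

lemma InUi.inv_eq {i : Fin n} {g : Matrix (Fin n) (Fin n) ℂ} (hg : InUi n i g) :
    g⁻¹ = 1 - (g - 1) := by
  refine inv_eq_left_inv ?_
  calc (1 - (g - 1)) * g = 1 - (g - 1) * (g - 1) := by noncomm_ring
    _ = 1 := by rw [hg.sub_one_mul_self, sub_zero]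

lemma InUi.inv_apply_of_ne {i j : Fin n} {g : Matrix (Fin n) (Fin n) ℂ} (hg : InUi n i g)
    (hj : j ≠ i) : g⁻¹ i j = -g i j := by
  simp [hg.inv_eq, one_apply_ne hj.symm]

end Matrices

open Fin.NatCast in
lemma vPerm_apply_last {n i : ℕ} (hi : i ≤ n) : vPerm n i (Fin.last n) = ⟨i, by omega⟩ := by
  induction hk : n - i generalizing i with
  | zero =>
    obtain rfl : i = n := by omega
    rw [vPerm, List.Ico.self_empty]
    rfl
  | succ k ih =>
    have hcast : ∀ m (hm : m < n + 1), ((m : ℕ) : Fin (n + 1)) = ⟨m, hm⟩ :=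
      fun m hm => Fin.ext (Fin.val_cast_of_lt hm)
    rw [vPerm, List.Ico.eq_cons (by omega), List.map_cons, List.prod_cons, Equiv.Perm.mul_apply,
      ← vPerm, ih (i := i + 1) (by omega) (by omega), ← hcast (i + 1) (by omega), Equiv.swap_apply_right,
      hcast i (by omega)]

section Flags

variable {n : ℕ}

lemma matFlag_self (g : Matrix (Fin n) (Fin n) ℂ) :
    matFlag n g n = LinearMap.range g.mulVecLin := by
  rw [range_mulVecLin, matFlag]
  congr 1
  exact Set.ext fun c => ⟨fun ⟨j, _, hc⟩ => ⟨j, hc.symm⟩, fun ⟨j, hc⟩ => ⟨j, j.isLt, hc.symm⟩⟩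

lemma matFlag_self_eq_top {g : Matrix (Fin n) (Fin n) ℂ} (hg : IsUnit g) : matFlag n g n = ⊤ := by
  rw [matFlag_self, LinearMap.range_eq_top, coe_mulVecLin]
  exact mulVec_surjective_iff_isUnit.mpr hg

lemma InHess.range_mulVecLin_le {X g : Matrix (Fin n) (Fin n) ℂ} {h : ℕ → ℕ}
    (hX : InHess n X h (matFlag n g)) (hg : IsUnit g) :
    LinearMap.range X.mulVecLin ≤ matFlag n g (h n) := by
  rintro _ ⟨x, rfl⟩
  exact hX n le_rfl x (matFlag_self_eq_top hg ▸ Submodule.mem_top)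

lemma matFlag_le_ker_dotProduct {g : Matrix (Fin n) (Fin n) ℂ} {ρ : Fin n → ℂ} {k : ℕ}
    (hρ : ∀ j : Fin n, (j : ℕ) < k → (ρ ᵥ* g) j = 0) :
    matFlag n g k ≤ LinearMap.ker (dotProductEquiv ℂ (Fin n) ρ) := by
  rw [matFlag, Submodule.span_le]
  rintro _ ⟨j, hj, rfl⟩
  exact hρ j hj

end Flags

/-- if the flag of `u_i v u_0 y` lies in the Springer fiber of `X_λ`, then the
entries `(u_i)_{ij}` vanish unless `j` labels a box at the end of a row of the base filling. -/
theorem stmt15 (n : ℕ) (lam : List ℕ) (hn : lam.sum = n + 1)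
    (w v y : Equiv.Perm (Fin (n+1)))
    (hv : v = vPerm n (w (Fin.last n) : ℕ)) (hy : y = v⁻¹ * w)
    (ui u0 : Matrix (Fin (n+1)) (Fin (n+1)) ℂ)
    (hui : InUi (n+1) (w (Fin.last n)) ui) (hu0 : InU0 n u0)
    (hflag : InHess (n+1) (Xlam (n+1) lam) (fun r => r - 1)
      (matFlag (n+1) (ui * permMat (n+1) v * u0 * permMat (n+1) y))) :
    ∀ j : Fin (n+1), j ≠ w (Fin.last n) → ¬ EndOfRow lam (j : ℕ) →
      ui (w (Fin.last n)) j = 0 := by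
  intro j hji hj
  set i := w (Fin.last n)
  have hv_inv : v⁻¹ i = Fin.last n := by
    rw [Equiv.Perm.inv_eq_iff_eq, hv, vPerm_apply_last (Nat.lt_succ_iff.mp i.isLt)]
  have hy_inv : y⁻¹ (Fin.last n) = Fin.last n := by
    rw [Equiv.Perm.inv_eq_iff_eq, hy, Equiv.Perm.mul_apply, hv_inv]
  have hρ : ui⁻¹.row i ᵥ* (ui * permMat (n+1) v * u0 * permMat (n+1) y) =
      Pi.single (Fin.last n) 1 := by
    rw [← single_one_vecMul, ← vecMul_vecMul, ← vecMul_vecMul, ← vecMul_vecMul, vecMul_vecMul _ ui⁻¹,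
      nonsing_inv_mul _ (hui.1.det_eq_one ▸ isUnit_one), vecMul_one, single_one_vecMul,
      row_permMat, hv_inv, single_one_vecMul, hu0.1.row_last, single_one_vecMul, row_permMat,
      hy_inv]
  have hg := (((hui.1.isUnit.mul (isUnit_permMat v)).mul hu0.1.isUnit).mul (isUnit_permMat y))
  have hmem := hflag.range_mulVecLin_le hg (single_mem_range_Xlam hn hj)
  have hker := matFlag_le_ker_dotProduct (fun k hk => by
    rw [hρ]; exact Pi.single_eq_of_ne (Fin.lt_last_iff_ne_last.mp (Fin.lt_def.mpr (by simpa using hk))) _) hmem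
  rw [LinearMap.mem_ker, dotProductEquiv_apply_apply, dotProduct_single, mul_one, row_apply,
    hui.inv_apply_of_ne hji, neg_eq_zero] at hker
  exact hker
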